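/- arXiv:2002.06041 — 2 statements merged into one kernel-verified Lean document; each statement's English description precedes it below -/
import Mathlib

section
/- Let 𝒮 be a set, λ a function with domain 𝒮, and θ, θ1, …, θK, θ* functions with domain 𝒮 such that θ(s) = f(θ1(s), …, θK(s), θ*(s)) for all s ∈ 𝒮, for some function f. Fix ℓ0 ∈ Img(λ). If each θk (k = 1, …, K) is identifiable at ℓ0 with common value ϑk on {s : λ(s) = ℓ0}, and θ* is strongly non-identifiable, then the identification region of θ at ℓ0 has the reduced form H{θ; ℓ0} = {f(ϑ1, …, ϑK, ϑ) : ϑ ∈ Img(θ*)}. -/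
/-- reduced form: If `θ s = f (θ₁ s, …, θ_K s) (θ* s)` for all `s`, each
`θₖ` is identifiable at `ℓ₀ ∈ Img(λ)` with common value `ϑ k`, and `θ*` is strongly
non-identifiable (its identification region is `Img(θ*)` at every `ℓ ∈ Img(λ)`), then
`H{θ; ℓ₀} = {f (ϑ₁, …, ϑ_K) ϑ : ϑ ∈ Img(θ*)}`. -/
theorem identification_region_reduced_form {S T V W L : Type*} {K : ℕ}
    (lam : S → L) (θ : S → T) (θk : Fin K → S → V) (θstar : S → W)
    (f : (Fin K → V) → W → T)
    (hθ : ∀ s : S, θ s = f (fun k => θk k s) (θstar s))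
    (ℓ₀ : L) (hℓ₀ : ℓ₀ ∈ Set.range lam)
    (ϑ : Fin K → V) (hk : ∀ k : Fin K, ∀ s : S, lam s = ℓ₀ → θk k s = ϑ k)
    (hstar : ∀ ℓ ∈ Set.range lam,
      {w : W | ∃ s : S, lam s = ℓ ∧ θstar s = w} = Set.range θstar) :
    {t : T | ∃ s : S, lam s = ℓ₀ ∧ θ s = t} =
      (fun w : W => f ϑ w) '' Set.range θstar := by
  ext t
  constructor
  · rintro ⟨s, hs, rfl⟩
    refine ⟨θstar s, ⟨s, rfl⟩, ?_⟩
    have hfun : (fun k => θk k s) = ϑ := funext fun k => hk k s hs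
    simp only [hθ s, hfun]
  · rintro ⟨w, hw, rfl⟩
    have : w ∈ {w : W | ∃ s : S, lam s = ℓ₀ ∧ θstar s = w} := by
      rw [hstar ℓ₀ hℓ₀]; exact hw
    obtain ⟨s, hs, hws⟩ := this
    refine ⟨s, hs, ?_⟩
    have hfun : (fun k => θk k s) = ϑ := funext fun k => hk k s hs
    rw [hθ s, hws, hfun]
end

section
/- Uniqueness of the average treatment effect under randomization: let μ1 and μ2 be probability measures on Bool × ℝ × ℝ with coordinates s = (z, y1, y0), each satisfying: z is independent of (y1, y0), the functions y1 and y0 are integrable, and 0 < μi({z = true}) < 1. If the pushforwards of μ1 and μ2 under s ↦ (if z then y1 else y0, z) agree (same law of (Y*, Z)), then ∫ (y1 − y0) dμ1 = ∫ (y1 − y0) dμ2; i.e., under the randomization assumption the average treatment effect is identifiable from the law of the observed data. -/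
/-!
Under randomization, conditioning on the event `{Z = b}` does not change the mean of the
potential outcome `Y(b)`, and on that event the observed outcome `Y*` equals `Y(b)`. Hence
`E[Y(b)] = E[Y* | Z = b]`, a functional of the law of `(Y*, Z)` alone, which is well defined
because `P(Z = b) > 0` for both values of `b`.
-/

open MeasureTheory ProbabilityTheory

theorem ProbabilityTheory.IndepFun.setIntegral_preimage_eq_mul {Ω β 𝓧 : Type*}
    [MeasurableSpace Ω] [MeasurableSpace β] [MeasurableSpace 𝓧] {μ : Measure Ω}
    {Z : Ω → β} {X : Ω → 𝓧} (h : IndepFun Z X μ) (hZ : Measurable Z) (hX : AEMeasurable X μ)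
    {S : Set β} (hS : MeasurableSet S) {f : 𝓧 → ℝ} (hf : AEStronglyMeasurable f (μ.map X)) :
    ∫ ω in Z ⁻¹' S, f (X ω) ∂μ = μ.real (Z ⁻¹' S) * ∫ ω, f (X ω) ∂μ :=
  ((IndepFun_iff_Indep Z X μ).1 h).setIntegral_eq_mul hZ.comap_le hX ⟨S, hS, rfl⟩ hf

def potentialOutcome (b : Bool) (y : ℝ × ℝ) : ℝ := if b then y.1 else y.2

def observe (s : Bool × ℝ × ℝ) : ℝ × Bool := (potentialOutcome s.1 s.2, s.1)

theorem measurable_potentialOutcome (b : Bool) : Measurable (potentialOutcome b) := by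
  cases b
  · exact measurable_snd
  · exact measurable_fst

theorem measurable_observe : Measurable observe := by
  have hY : Measurable fun s : Bool × ℝ × ℝ => potentialOutcome s.1 s.2 :=
    measurable_from_prod_countable_right measurable_potentialOutcome
  exact hY.prodMk measurable_fst

theorem integral_potentialOutcome_eq_integral_cond_observe (μ : Measure (Bool × ℝ × ℝ))
    [IsFiniteMeasure μ] (hind : IndepFun (fun s : Bool × ℝ × ℝ => s.1) (fun s => s.2) μ)
    (b : Bool) (hb : μ {s | s.1 = b} ≠ 0) :
    ∫ s, potentialOutcome b s.2 ∂μ = ∫ q, q.1 ∂(μ.map observe)[|{q | q.2 = b}] := by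
  have hS : MeasurableSet {q : ℝ × Bool | q.2 = b} := measurable_snd (measurableSet_singleton b)
  have hpre : observe ⁻¹' {q | q.2 = b} = {s | s.1 = b} := rfl
  have hobs : ∫ q in {q | q.2 = b}, q.1 ∂(μ.map observe) =
      μ.real {s | s.1 = b} * ∫ s, potentialOutcome b s.2 ∂μ := by
    rw [setIntegral_map hS measurable_fst.aestronglyMeasurable measurable_observe.aemeasurable,
      hpre]
    calc ∫ s in {s | s.1 = b}, (observe s).1 ∂μ
        = ∫ s in {s | s.1 = b}, potentialOutcome b s.2 ∂μ :=
          setIntegral_congr_fun (hpre ▸ measurable_observe hS) fun s (hs : s.1 = b) => by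
            simp only [observe, hs]
      _ = _ := hind.setIntegral_preimage_eq_mul measurable_fst measurable_snd.aemeasurable
          (measurableSet_singleton b) (measurable_potentialOutcome b).aestronglyMeasurable
  rw [ProbabilityTheory.cond, integral_smul_measure, hobs,
    Measure.map_apply measurable_observe hS, hpre, ENNReal.toReal_inv, ← measureReal_def,
    smul_eq_mul, inv_mul_cancel_left₀]
  exact (measureReal_ne_zero_iff (measure_ne_top μ _)).2 hb

theorem measure_fst_eq_false_ne_zero {α : Type*} [MeasurableSpace α] {μ : Measure (Bool × α)}
    [IsProbabilityMeasure μ] (h : μ {s | s.1 = true} < 1) : μ {s | s.1 = false} ≠ 0 := by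
  have hcompl : {s : Bool × α | s.1 = false} = {s | s.1 = true}ᶜ := by ext; simp
  have hmeas : MeasurableSet {s : Bool × α | s.1 = true} :=
    measurable_fst (measurableSet_singleton true)
  rw [hcompl, Ne, prob_compl_eq_zero_iff hmeas]
  exact h.ne

/-- uniqueness of ATE under randomization: if `μ₁, μ₂` are probability
measures on `Bool × ℝ × ℝ` each satisfying the randomization assumption (`Z` independent
of `(Y(1), Y(0))`), with integrable potential outcomes, `0 < P(Z = true) < 1`, and the
same law of `(Y*, Z)`, then they have the same average treatment effect. -/
theorem ate_unique_under_randomization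
    (μ₁ μ₂ : Measure (Bool × ℝ × ℝ)) [IsProbabilityMeasure μ₁] [IsProbabilityMeasure μ₂]
    (hind₁ : ProbabilityTheory.IndepFun
      (fun s : Bool × ℝ × ℝ => s.1) (fun s : Bool × ℝ × ℝ => s.2) μ₁)
    (hind₂ : ProbabilityTheory.IndepFun
      (fun s : Bool × ℝ × ℝ => s.1) (fun s : Bool × ℝ × ℝ => s.2) μ₂)
    (h₁₁ : Integrable (fun s : Bool × ℝ × ℝ => s.2.1) μ₁)
    (h₁₀ : Integrable (fun s : Bool × ℝ × ℝ => s.2.2) μ₁)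
    (h₂₁ : Integrable (fun s : Bool × ℝ × ℝ => s.2.1) μ₂)
    (h₂₀ : Integrable (fun s : Bool × ℝ × ℝ => s.2.2) μ₂)
    (hz₁0 : 0 < μ₁ {s : Bool × ℝ × ℝ | s.1 = true})
    (hz₁1 : μ₁ {s : Bool × ℝ × ℝ | s.1 = true} < 1)
    (hz₂0 : 0 < μ₂ {s : Bool × ℝ × ℝ | s.1 = true})
    (hz₂1 : μ₂ {s : Bool × ℝ × ℝ | s.1 = true} < 1)
    (hmap : Measure.map (fun s : Bool × ℝ × ℝ => ((if s.1 then s.2.1 else s.2.2), s.1)) μ₁ =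
            Measure.map (fun s : Bool × ℝ × ℝ => ((if s.1 then s.2.1 else s.2.2), s.1)) μ₂) :
    (∫ s : Bool × ℝ × ℝ, (s.2.1 - s.2.2) ∂μ₁) =
      ∫ s : Bool × ℝ × ℝ, (s.2.1 - s.2.2) ∂μ₂ := by
  have hμ₁ := integral_potentialOutcome_eq_integral_cond_observe μ₁ hind₁
  have hμ₂ := integral_potentialOutcome_eq_integral_cond_observe μ₂ hind₂
  have hobs : μ₁.map observe = μ₂.map observe := hmap
  calc ∫ s, (s.2.1 - s.2.2) ∂μ₁
      = ∫ s, potentialOutcome true s.2 ∂μ₁ - ∫ s, potentialOutcome false s.2 ∂μ₁ :=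
        integral_sub h₁₁ h₁₀
    _ = ∫ s, potentialOutcome true s.2 ∂μ₂ - ∫ s, potentialOutcome false s.2 ∂μ₂ := by
        rw [hμ₁ true hz₁0.ne', hμ₁ false (measure_fst_eq_false_ne_zero hz₁1), hobs,
          ← hμ₂ true hz₂0.ne', ← hμ₂ false (measure_fst_eq_false_ne_zero hz₂1)]
    _ = ∫ s, (s.2.1 - s.2.2) ∂μ₂ := (integral_sub h₂₁ h₂₀).symm
end
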